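/- arXiv:2510.21499 — 2 statements merged into one kernel-verified Lean document; each statement's English description precedes it below -/
import Mathlib

section
/- The element ∑_{A ⊆ E} [Δ_A]^0 of 𝓕, where Δ_A is the diagonal in X²_{AA} and 0 is the zero linear form on A, is a two-sided unit for the product ⋆ on 𝓕. -/
open scoped Classical

set_option linter.unusedSectionVars false

noncomputable section

namespace Lusztig

variable (E X : Type) [AddCommGroup E] [Module (ZMod 2) E] [Fintype E]
  [Fintype X] [AddAction E X]

/-- The stabilizer of `x` in `E`, as a subset of `E`. -/
def stabSet (x : X) : Set E := {e : E | e +ᵥ x = x}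

/-- `X_A`: the set of points of `X` whose stabilizer in `E` equals `A`. -/
def XA (A : Submodule (ZMod 2) E) : Set X := {x : X | stabSet E X x = (A : Set E)}

/-- `X²_{AB} = X_A × X_B`. -/
def X2 (A B : Submodule (ZMod 2) E) : Set (X × X) := (XA E X A) ×ˢ (XA E X B)

/-- The `E`-orbit of `x` in `X`. -/
def orb (x : X) : Set X := {y : X | ∃ e : E, y = e +ᵥ x}

/-- The `E`-orbit of `(x,y)` for the diagonal action of `E` on `X × X`. -/
def orb2 (x y : X) : Set (X × X) := {q : X × X | ∃ e : E, q = (e +ᵥ x, e +ᵥ y)}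

/-- `O` is an `E`-orbit (for the diagonal action) contained in `X²_{AB}`. -/
def IsOrb2 (A B : Submodule (ZMod 2) E) (O : Set (X × X)) : Prop :=
  ∃ x y : X, x ∈ XA E X A ∧ y ∈ XA E X B ∧ O = orb2 E X x y

/-- The `E × B`-orbit of `(x,y)` for the action `(e,b)·(x,y) = (e+b+x, e+y)`. -/
def orbEB (B : Submodule (ZMod 2) E) (x y : X) : Set (X × X) :=
  {q : X × X | ∃ e b : E, b ∈ B ∧ q = ((e + b) +ᵥ x, e +ᵥ y)}

/-- `M` is an `E × B`-orbit contained in `X²_{AC}` for the action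
`(e,b)·(x,y) = (e+b+x, e+y)`. -/
def IsOrbEB (A B C : Submodule (ZMod 2) E) (M : Set (X × X)) : Prop :=
  ∃ x y : X, x ∈ XA E X A ∧ y ∈ XA E X C ∧ M = orbEB E X B x y

/-- Image under the first projection. -/
def p1 (S : Set (X × X)) : Set X := Prod.fst '' S

/-- Image under the second projection. -/
def p2 (S : Set (X × X)) : Set X := Prod.snd '' S

/-- `U_{ABC} = {(a,b,c) ∈ A × B × C : a + b + c = 0}`. -/
def UABC (A B C : Submodule (ZMod 2) E) : Set (E × E × E) :=
  {t : E × E × E | t.1 ∈ A ∧ t.2.1 ∈ B ∧ t.2.2 ∈ C ∧ t.1 + t.2.1 + t.2.2 = 0}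

/-- `X̄_C`: the set of `E`-orbits contained in `X_C`. -/
def barX (C : Submodule (ZMod 2) E) : Set (Set X) :=
  {s : Set X | ∃ x ∈ XA E X C, s = orb E X x}

/-- The dual (space of linear forms `P → ℤ/2`) of a subspace `P` of `E`. -/
abbrev Dl (P : Submodule (ZMod 2) E) : Type := ↥P →ₗ[ZMod 2] ZMod 2

/-- Restriction of a linear form along an inclusion of subspaces. -/
def res {P Q : Submodule (ZMod 2) E} (h : P ≤ Q) (φ : Dl E Q) : Dl E P :=
  φ.comp (Submodule.inclusion h)

theorem leAB (A B C : Submodule (ZMod 2) E) : A ⊓ B ⊓ C ≤ A ⊓ B := inf_le_left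
theorem leBC (A B C : Submodule (ZMod 2) E) : A ⊓ B ⊓ C ≤ B ⊓ C :=
  le_inf (inf_le_left.trans inf_le_right) inf_le_right
theorem leAC (A B C : Submodule (ZMod 2) E) : A ⊓ B ⊓ C ≤ A ⊓ C :=
  le_inf (inf_le_left.trans inf_le_left) inf_le_right
theorem leBA (A B : Submodule (ZMod 2) E) : A ⊓ B ≤ B ⊓ A := le_inf inf_le_right inf_le_left

/-- The convolution product `𝓕_{AB} × 𝓕_{BC} → 𝓕_{AC}`. -/
def conv (A B C : Submodule (ZMod 2) E)
    (f₁ : (X × X) × Dl E (A ⊓ B) → ℂ) (f₂ : (X × X) × Dl E (B ⊓ C) → ℂ) :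
    (X × X) × Dl E (A ⊓ C) → ℂ :=
  fun p =>
    (∑ᶠ (y : X) (_ : y ∈ XA E X B) (ε₁ : Dl E (A ⊓ B)) (ε₂ : Dl E (B ⊓ C))
        (_ : res E (leAB E A B C) ε₁ + res E (leBC E A B C) ε₂
              + res E (leAC E A B C) p.2 = 0),
        f₁ ((p.1.1, y), ε₁) * f₂ ((y, p.1.2), ε₂)) *
      (Nat.card ↥(A ⊓ B ⊓ C) : ℂ) / (Nat.card ↥(A ⊓ C) : ℂ)

/-- The defining conditions for membership in `𝓕_{AB}`: supported on `X²_{AB}` and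
invariant under the diagonal `E`-action. -/
def MemF (A B : Submodule (ZMod 2) E) (f : (X × X) × Dl E (A ⊓ B) → ℂ) : Prop :=
  (∀ p : (X × X) × Dl E (A ⊓ B), p.1 ∉ X2 E X A B → f p = 0) ∧
  (∀ (e : E) (x y : X) (ε : Dl E (A ⊓ B)), f ((e +ᵥ x, e +ᵥ y), ε) = f ((x, y), ε))

/-- `𝓕_{AB}` as a subspace of the space of all functions. -/
def FAB (A B : Submodule (ZMod 2) E) : Submodule ℂ ((X × X) × Dl E (A ⊓ B) → ℂ) where
  carrier := {f | MemF E X A B f}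
  add_mem' := by
    intro a b ha hb
    exact ⟨fun p hp => by simp [ha.1 p hp, hb.1 p hp],
      fun e x y ε => by simp [Pi.add_apply, ha.2 e x y ε, hb.2 e x y ε]⟩
  zero_mem' := ⟨fun p hp => rfl, fun e x y ε => rfl⟩
  smul_mem' := by
    intro c a ha
    exact ⟨fun p hp => by simp [Pi.smul_apply, ha.1 p hp],
      fun e x y ε => by simp [Pi.smul_apply, ha.2 e x y ε]⟩

/-- `[Ξ]^ε`. -/
def br (A B : Submodule (ZMod 2) E) (Ξ : Set (X × X)) (ε : Dl E (A ⊓ B)) :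
    (X × X) × Dl E (A ⊓ B) → ℂ :=
  fun p => if p.1 ∈ Ξ ∧ p.2 = ε then 1 else 0

/-- The ambient space of `𝓕 = ⊕_{A,B} 𝓕_{AB}` (all summands at once). -/
abbrev FF : Type := ∀ A B : Submodule (ZMod 2) E, (X × X) × Dl E (A ⊓ B) → ℂ

/-- The embedding of the `(A,B)` summand into `𝓕`. -/
def emb (A B : Submodule (ZMod 2) E) (f : (X × X) × Dl E (A ⊓ B) → ℂ) : FF E X :=
  fun A' B' p =>
    if h : A = A' ∧ B = B' then f (p.1, cast (by rw [h.1, h.2]) p.2) else 0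

/-- `𝓕` as a subspace of `FF`: componentwise supported on `X²_{AB}` and `E`-invariant. -/
def FFsub : Submodule ℂ (FF E X) where
  carrier := {g | ∀ A B, MemF E X A B (g A B)}
  add_mem' := by
    intro a b ha hb A B
    exact ⟨fun p hp => by simp [(ha A B).1 p hp, (hb A B).1 p hp],
      fun e x y ε => by simp [(ha A B).2 e x y ε, (hb A B).2 e x y ε]⟩
  zero_mem' := fun A B => ⟨fun p hp => rfl, fun e x y ε => rfl⟩
  smul_mem' := by
    intro c a ha A B
    exact ⟨fun p hp => by simp [(ha A B).1 p hp],
      fun e x y ε => by simp [(ha A B).2 e x y ε]⟩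

/-- The product on `𝓕` (zero between summands `𝓕_{AB}`, `𝓕_{B'C}` with `B ≠ B'`). -/
def mulFF (g h : FF E X) : FF E X :=
  fun A C => ∑ᶠ B : Submodule (ZMod 2) E, conv E X A B C (g A B) (h B C)

/-- The diagonal `Δ_A ⊆ X²_{AA}`. -/
def diagSet (A : Submodule (ZMod 2) E) : Set (X × X) :=
  {q : X × X | q.1 ∈ XA E X A ∧ q.2 = q.1}

/-- The element `∑_A [Δ_A]^0` of `𝓕`. -/
def unitFF : FF E X :=
  ∑ᶠ A : Submodule (ZMod 2) E, emb E X A A (br E X A A (diagSet E X A) 0)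

/-- The map `f ↦ f^#` on `𝓕`. -/
def shFF (g : FF E X) : FF E X :=
  fun A B p => g B A ((p.1.2, p.1.1), res E (leBA E B A) p.2)

/-- `𝒪 • 𝒪'`. -/
def bullet (O O' : Set (X × X)) : Set (X × X) :=
  {q : X × X | ∃ y : X, (q.1, y) ∈ O ∧ (y, q.2) ∈ O'}

/-- `∑_{ε ∈ α̃} [𝓜]^ε ∈ 𝓕_{AC}`, where `α̃` is the fibre of
`(A∩C)* → (A∩B∩C)*` over `α`. -/
def bSum (A B C : Submodule (ZMod 2) E) (M : Set (X × X)) (α : Dl E (A ⊓ B ⊓ C)) :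
    (X × X) × Dl E (A ⊓ C) → ℂ :=
  ∑ᶠ (ε : Dl E (A ⊓ C)) (_ : res E (leAC E A B C) ε = α), br E X A C M ε

/-- The set `𝓑_{oBC} ⊆ 𝓕` (embedded in `FF`). -/
def BoBC (A B C : Submodule (ZMod 2) E) (o : Set X) : Set (FF E X) :=
  {g | ∃ (M : Set (X × X)) (α : Dl E (A ⊓ B ⊓ C)),
      IsOrbEB E X A B C M ∧ p1 X M = o ∧ g = emb E X A C (bSum E X A B C M α)}

/-- The set `𝓑_{oB} = ⊔_C 𝓑_{oBC}`. -/
def BoB (A B : Submodule (ZMod 2) E) (o : Set X) : Set (FF E X) :=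
  ⋃ C : Submodule (ZMod 2) E, BoBC E X A B C o

/-- `[[oB]]`, the `ℂ`-span of `𝓑_{oB}`. -/
def ooB (A B : Submodule (ZMod 2) E) (o : Set X) : Submodule ℂ (FF E X) :=
  Submodule.span ℂ (BoB E X A B o)


/-! ### Auxiliary lemmas -/

instance : Finite (Submodule (ZMod 2) E) :=
  Finite.of_injective (fun A => (A : Set E)) SetLike.coe_injective

lemma finsum_pi_apply {ι : Type*} [Finite ι] {κ : Type*} {M : κ → Type*}
    [∀ k, AddCommMonoid (M k)] (f : ι → ∀ k, M k) (k : κ) :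
    (∑ᶠ i, f i) k = ∑ᶠ i, f i k := by
  cases nonempty_fintype ι
  rw [finsum_eq_sum_of_fintype, finsum_eq_sum_of_fintype, Finset.sum_apply]

lemma lin_add_self {P : Submodule (ZMod 2) E} (φ : Dl E P) : φ + φ = 0 := by
  ext v
  have h : ∀ a : ZMod 2, a + a = 0 := by decide
  simp [h (φ v)]

lemma lin_eq_of_add_eq_zero {P : Submodule (ZMod 2) E} {φ ψ : Dl E P}
    (h : φ + ψ = 0) : φ = ψ := by
  have h1 : φ + ψ + ψ = ψ := by rw [h, zero_add]
  rwa [add_assoc, lin_add_self, add_zero] at h1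

lemma res_add {P Q : Submodule (ZMod 2) E} (h : P ≤ Q) (φ ψ : Dl E Q) :
    res E h (φ + ψ) = res E h φ + res E h ψ :=
  LinearMap.add_comp _ _ _

lemma res_zero {P Q : Submodule (ZMod 2) E} (h : P ≤ Q) :
    res E h (0 : Dl E Q) = 0 :=
  LinearMap.zero_comp _

lemma res_eq_zero {P Q : Submodule (ZMod 2) E} (h : P ≤ Q) (h' : Q ≤ P)
    {φ : Dl E Q} (hφ : res E h φ = 0) : φ = 0 := by
  ext v
  have h1 := DFunLike.congr_fun hφ ⟨v.1, h' v.2⟩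
  have h2 : Submodule.inclusion h ⟨v.1, h' v.2⟩ = v := Subtype.ext rfl
  simp only [res, LinearMap.comp_apply, LinearMap.zero_apply, h2] at h1
  simpa using h1

lemma res_cancel {P Q : Submodule (ZMod 2) E} (h : P ≤ Q) (h' : Q ≤ P)
    {φ ψ : Dl E Q} (hsum : res E h φ + res E h ψ = 0) : φ = ψ := by
  apply lin_eq_of_add_eq_zero
  exact res_eq_zero E h h' (by rw [res_add, hsum])

lemma card_ne_zero (P : Submodule (ZMod 2) E) : (Nat.card ↥P : ℂ) ≠ 0 :=
  Nat.cast_ne_zero.mpr Nat.card_pos.ne' 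

lemma unitFF_diag (A : Submodule (ZMod 2) E) :
    unitFF E X A A = br E X A A (diagSet E X A) 0 := by
  show (∑ᶠ A', emb E X A' A' (br E X A' A' (diagSet E X A') 0)) A A = _
  rw [finsum_pi_apply, finsum_pi_apply]
  rw [finsum_eq_single _ A]
  · funext p
    show (if h : A = A ∧ A = A then _ else 0) = _
    rw [dif_pos ⟨rfl, rfl⟩, cast_eq]
  · intro A' hA'
    funext p
    exact dif_neg (fun hc => hA' hc.1)

lemma unitFF_ne {A B : Submodule (ZMod 2) E} (h : A ≠ B) :
    unitFF E X A B = 0 := by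
  show (∑ᶠ A', emb E X A' A' (br E X A' A' (diagSet E X A') 0)) A B = _
  rw [finsum_pi_apply, finsum_pi_apply]
  apply finsum_eq_zero_of_forall_eq_zero
  intro A'
  funext p
  exact dif_neg (fun hc => h (hc.1.symm.trans hc.2))

lemma conv_zero_left (A B C : Submodule (ZMod 2) E)
    (f₂ : (X × X) × Dl E (B ⊓ C) → ℂ) : conv E X A B C 0 f₂ = 0 := by
  funext p
  simp [conv]

lemma conv_zero_right (A B C : Submodule (ZMod 2) E)
    (f₁ : (X × X) × Dl E (A ⊓ B) → ℂ) : conv E X A B C f₁ 0 = 0 := by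
  funext p
  simp [conv]

lemma conv_unit_left (A C : Submodule (ZMod 2) E)
    (g : (X × X) × Dl E (A ⊓ C) → ℂ) (hg : MemF E X A C g) :
    conv E X A A C (br E X A A (diagSet E X A) 0) g = g := by
  have hle : A ⊓ C ≤ A ⊓ A ⊓ C := le_inf (le_inf inf_le_left inf_le_left) inf_le_right
  have hBCAC : leBC E A A C = leAC E A A C := rfl
  have hcard : (Nat.card ↥(A ⊓ A ⊓ C) : ℂ) = (Nat.card ↥(A ⊓ C) : ℂ) := by
    rw [show A ⊓ A ⊓ C = A ⊓ C by rw [inf_idem]]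
  funext p
  obtain ⟨⟨x, z⟩, ε⟩ := p
  simp only [conv]
  by_cases hx : x ∈ XA E X A
  · rw [finsum_eq_single _ x, finsum_eq_if, if_pos hx,
        finsum_eq_single _ (0 : Dl E (A ⊓ A)), finsum_eq_single _ ε,
        finsum_eq_if, if_pos, hcard, mul_div_cancel_right₀ _ (card_ne_zero E (A ⊓ C))]
    · show br E X A A (diagSet E X A) 0 ((x, x), 0) * g ((x, z), ε) = g ((x, z), ε)
      rw [show br E X A A (diagSet E X A) 0 ((x, x), 0) = 1 from
        if_pos ⟨⟨hx, rfl⟩, rfl⟩, one_mul]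
    · -- the condition holds at ε₁ = 0, ε₂ = ε
      rw [res_zero, zero_add, hBCAC, ← res_add, lin_add_self, res_zero]
    · -- ε₂ ≠ ε gives zero
      intro ε₂ hε₂
      rw [finsum_eq_if, if_neg]
      intro hc
      rw [res_zero, zero_add, hBCAC, ← res_add] at hc
      exact hε₂ (lin_eq_of_add_eq_zero E (res_eq_zero E (leAC E A A C) hle hc))
    · -- ε₁ ≠ 0 gives zero
      intro ε₁ hε₁
      have hbr : br E X A A (diagSet E X A) 0 ((x, x), ε₁) = 0 :=
        if_neg (fun hc => hε₁ hc.2)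
      simp [hbr]
    · -- y ≠ x gives zero
      intro y hy
      have hbr : ∀ ε₁ : Dl E (A ⊓ A),
          br E X A A (diagSet E X A) 0 ((x, y), ε₁) = 0 :=
        fun ε₁ => if_neg (fun hc => hy hc.1.2)
      simp [hbr]
  · -- x ∉ X_A : both sides vanish
    have hg0 : g ((x, z), ε) = 0 :=
      hg.1 ((x, z), ε) (fun hmem => hx hmem.1)
    have hz : ∀ y : X, ∀ ε₁ : Dl E (A ⊓ A),
        br E X A A (diagSet E X A) 0 ((x, y), ε₁) = 0 := by
      intro y ε₁
      exact if_neg (fun hc => hx hc.1.1)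
    rw [hg0]
    have : (∑ᶠ (y : X) (_ : y ∈ XA E X A) (ε₁ : Dl E (A ⊓ A)) (ε₂ : Dl E (A ⊓ C))
        (_ : res E (leAB E A A C) ε₁ + res E (leBC E A A C) ε₂
              + res E (leAC E A A C) ε = 0),
        br E X A A (diagSet E X A) 0 ((x, y), ε₁) * g ((y, z), ε₂)) = 0 := by
      apply finsum_eq_zero_of_forall_eq_zero
      intro y
      simp [hz y]
    rw [this, zero_mul, zero_div]

lemma conv_unit_right (A C : Submodule (ZMod 2) E)
    (g : (X × X) × Dl E (A ⊓ C) → ℂ) (hg : MemF E X A C g) :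
    conv E X A C C g (br E X C C (diagSet E X C) 0) = g := by
  have hle : A ⊓ C ≤ A ⊓ C ⊓ C := le_inf le_rfl inf_le_right
  have hABAC : leAB E A C C = leAC E A C C := rfl
  have hcard : (Nat.card ↥(A ⊓ C ⊓ C) : ℂ) = (Nat.card ↥(A ⊓ C) : ℂ) := by
    rw [show A ⊓ C ⊓ C = A ⊓ C by rw [inf_assoc, inf_idem]]
  funext p
  obtain ⟨⟨x, z⟩, ε⟩ := p
  simp only [conv]
  have houter : ∀ y : X, y ≠ z →
      (∑ᶠ (_ : y ∈ XA E X C) (ε₁ : Dl E (A ⊓ C)) (ε₂ : Dl E (C ⊓ C))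
        (_ : res E (leAB E A C C) ε₁ + res E (leBC E A C C) ε₂
              + res E (leAC E A C C) ε = 0),
        g ((x, y), ε₁) * br E X C C (diagSet E X C) 0 ((y, z), ε₂)) = 0 := by
    intro y hy
    have hbr : ∀ ε₂ : Dl E (C ⊓ C),
        br E X C C (diagSet E X C) 0 ((y, z), ε₂) = 0 := by
      intro ε₂
      exact if_neg (fun hc => hy hc.1.2.symm)
    simp [hbr]
  by_cases hzc : z ∈ XA E X C
  · rw [finsum_eq_single _ z houter, finsum_eq_if, if_pos hzc,
        finsum_eq_single _ ε, finsum_eq_single _ (0 : Dl E (C ⊓ C)),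
        finsum_eq_if, if_pos, hcard, mul_div_cancel_right₀ _ (card_ne_zero E (A ⊓ C))]
    · show g ((x, z), ε) * br E X C C (diagSet E X C) 0 ((z, z), 0) = g ((x, z), ε)
      rw [show br E X C C (diagSet E X C) 0 ((z, z), 0) = 1 from
        if_pos ⟨⟨hzc, rfl⟩, rfl⟩, mul_one]
    · -- the condition holds at ε₁ = ε, ε₂ = 0
      rw [res_zero, add_zero, hABAC, ← res_add, lin_add_self, res_zero]
    · -- ε₂ ≠ 0 gives zero
      intro ε₂ hε₂
      have hbr : br E X C C (diagSet E X C) 0 ((z, z), ε₂) = 0 :=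
        if_neg (fun hc => hε₂ hc.2)
      simp [hbr]
    · -- ε₁ ≠ ε gives zero
      intro ε₁ hε₁
      apply finsum_eq_zero_of_forall_eq_zero
      intro ε₂
      by_cases h0 : ε₂ = (0 : Dl E (C ⊓ C))
      · subst h0
        rw [finsum_eq_if, if_neg]
        intro hc
        rw [res_zero, add_zero, hABAC, ← res_add] at hc
        exact hε₁ (lin_eq_of_add_eq_zero E (res_eq_zero E (leAC E A C C) hle hc))
      · have hbr : br E X C C (diagSet E X C) 0 ((z, z), ε₂) = 0 :=
          if_neg (fun hc => h0 hc.2)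
        simp [hbr]
  · -- z ∉ X_C : both sides vanish
    have hg0 : g ((x, z), ε) = 0 :=
      hg.1 ((x, z), ε) (fun hmem => hzc hmem.2)
    rw [hg0]
    have : (∑ᶠ (y : X) (_ : y ∈ XA E X C) (ε₁ : Dl E (A ⊓ C)) (ε₂ : Dl E (C ⊓ C))
        (_ : res E (leAB E A C C) ε₁ + res E (leBC E A C C) ε₂
              + res E (leAC E A C C) ε = 0),
        g ((x, y), ε₁) * br E X C C (diagSet E X C) 0 ((y, z), ε₂)) = 0 := by
      apply finsum_eq_zero_of_forall_eq_zero
      intro y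
      by_cases hyz : y = z
      · subst hyz
        rw [finsum_eq_if, if_neg hzc]
      · exact houter y hyz ▸ rfl
    rw [this, zero_mul, zero_div]

/-- `∑_A [Δ_A]^0` is a two-sided unit of `(𝓕, ⋆)`. -/
theorem statement3 :
    ∀ g ∈ FFsub E X,
      mulFF E X (unitFF E X) g = g ∧ mulFF E X g (unitFF E X) = g := by
  intro g hg
  constructor
  · funext A C
    show (∑ᶠ B, conv E X A B C (unitFF E X A B) (g B C)) = g A C
    rw [finsum_eq_single _ A]
    · rw [unitFF_diag, conv_unit_left E X A C (g A C) (hg A C)]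
    · intro B hB
      rw [unitFF_ne E X (fun h => hB h.symm), conv_zero_left]
  · funext A C
    show (∑ᶠ B, conv E X A B C (g A B) (unitFF E X B C)) = g A C
    rw [finsum_eq_single _ C]
    · rw [unitFF_diag, conv_unit_right E X A C (g A C) (hg A C)]
    · intro B hB
      rw [unitFF_ne E X hB, conv_zero_right]

end Lusztig
end
end

section
/- Let A, B, C be subspaces of E, let 𝒪 be an E-orbit in X²_{AB} and 𝒪' an E-orbit in X²_{BC} with p₂𝒪 = p₁𝒪'. Then the set {(x,y,z) ∈ X_A × X_B × X_C : (x,y) ∈ 𝒪, (y,z) ∈ 𝒪'} has cardinality |E| · |B| / (|A∩B| · |B∩C|), and its image 𝒪 • 𝒪' under (x,y,z) ↦ (x,z) has cardinality |𝒪 • 𝒪'| = |E| · |B| / |U_{ABC}|. -/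
open scoped Classical

set_option linter.unusedSectionVars false

noncomputable section

namespace Lusztig

variable (E X : Type) [AddCommGroup E] [Module (ZMod 2) E] [Fintype E]
  [Fintype X] [AddAction E X]

lemma st6_addSelf (e : E) : e + e = 0 := by
  have h := two_smul (ZMod 2) e
  rw [show (2:ZMod 2) = 0 by decide, zero_smul] at h
  exact h.symm

instance st6_vadd3 : VAdd (E × E) (X × X × X) :=
  ⟨fun p t => (p.1 +ᵥ t.1, p.1 +ᵥ t.2.1, p.2 +ᵥ t.2.2)⟩

@[simp] lemma st6_vadd3_def (p : E × E) (t : X × X × X) :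
    p +ᵥ t = (p.1 +ᵥ t.1, p.1 +ᵥ t.2.1, p.2 +ᵥ t.2.2) := rfl

instance st6_act3 : AddAction (E × E) (X × X × X) where
  zero_vadd t := by simp
  add_vadd p q t := by simp [add_vadd]

instance st6_vadd2 : VAdd (E × E) (X × X) :=
  ⟨fun p t => (p.1 +ᵥ t.1, p.2 +ᵥ t.2)⟩

@[simp] lemma st6_vadd2_def (p : E × E) (t : X × X) :
    p +ᵥ t = (p.1 +ᵥ t.1, p.2 +ᵥ t.2) := rfl

instance st6_act2 : AddAction (E × E) (X × X) where
  zero_vadd t := by simp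
  add_vadd p q t := by simp [add_vadd]

def st6_K (B : Submodule (ZMod 2) E) : AddSubgroup (E × E) where
  carrier := {p | p.1 + p.2 ∈ B}
  zero_mem' := by simp
  add_mem' := by
    intro a b ha hb
    have : (a.1 + b.1) + (a.2 + b.2) = (a.1 + a.2) + (b.1 + b.2) := by abel
    simpa [this] using B.add_mem ha hb
  neg_mem' := by
    intro a ha
    have : (-a.1) + (-a.2) = -(a.1 + a.2) := by abel
    simpa [this] using B.neg_mem ha

def st6_kEquiv (B : Submodule (ZMod 2) E) : (st6_K E B) ≃ E × B where
  toFun k := (k.1.1, ⟨k.1.1 + k.1.2, k.2⟩)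
  invFun p := ⟨(p.1, p.1 + p.2.1), by
    show p.1 + (p.1 + p.2.1) ∈ B
    rw [← add_assoc, st6_addSelf, zero_add]; exact p.2.2⟩
  left_inv k := by
    ext <;> simp
    rw [← add_assoc, st6_addSelf, zero_add]
  right_inv p := by
    ext <;> simp
    rw [← add_assoc, st6_addSelf, zero_add]


lemma st6_stab_vadd (e : E) (x : X) : stabSet E X (e +ᵥ x) = stabSet E X x := by
  ext f
  simp only [stabSet, Set.mem_setOf_eq]
  constructor
  · intro hf
    have : e +ᵥ (f +ᵥ x) = e +ᵥ x := by
      rw [vadd_vadd, add_comm, ← vadd_vadd]; exact hf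
    exact vadd_left_cancel e this
  · intro hf
    rw [vadd_vadd, add_comm, ← vadd_vadd, hf]

lemma st6_XA_vadd (A : Submodule (ZMod 2) E) (e : E) (x : X) (hx : x ∈ XA E X A) :
    e +ᵥ x ∈ XA E X A := by
  simp only [XA, Set.mem_setOf_eq] at hx ⊢
  rw [st6_stab_vadd]; exact hx

lemma st6_stab_mem {A : Submodule (ZMod 2) E} {x : X} (hx : x ∈ XA E X A) (e : E) :
    e +ᵥ x = x ↔ e ∈ A := by
  simp only [XA, Set.mem_setOf_eq] at hx
  have : e ∈ stabSet E X x ↔ e ∈ (A : Set E) := by rw [hx]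
  simpa [stabSet] using this

lemma st6_orb2_vadd (g : E) (x y : X) :
    orb2 E X (g +ᵥ x) (g +ᵥ y) = orb2 E X x y := by
  ext q
  simp only [orb2, Set.mem_setOf_eq]
  constructor
  · rintro ⟨e, rfl⟩
    exact ⟨e + g, by simp [vadd_vadd]⟩
  · rintro ⟨e, rfl⟩
    refine ⟨e + g, ?_⟩
    have hg : g + g = 0 := st6_addSelf E g
    simp [vadd_vadd, add_assoc, hg]


lemma st6_neg (e : E) : -e = e := neg_eq_of_add_eq_zero_left (st6_addSelf E e)

lemma st6_Kmem {B : Submodule (ZMod 2) E} (k : st6_K E B) : k.1.1 + k.1.2 ∈ B := k.2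

lemma st6_mem_stab1 {A B C : Submodule (ZMod 2) E} {x y z : X} (hx : x ∈ XA E X A)
    (hy : y ∈ XA E X B) (hz : z ∈ XA E X C) (k : st6_K E B) :
    k ∈ AddAction.stabilizer (st6_K E B) ((x, y, z) : X × X × X) ↔
      k.1.1 ∈ A ⊓ B ∧ k.1.2 ∈ B ⊓ C := by
  rw [AddAction.mem_stabilizer_iff]
  have hvadd : k +ᵥ ((x, y, z) : X × X × X) = (k.1.1 +ᵥ x, k.1.1 +ᵥ y, k.1.2 +ᵥ z) := rfl
  rw [hvadd, Prod.ext_iff, Prod.ext_iff]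
  simp only [st6_stab_mem E X hx, st6_stab_mem E X hy, st6_stab_mem E X hz,
    Submodule.mem_inf]
  constructor
  · rintro ⟨hA, hB, hC⟩
    have hk : k.1.1 + k.1.2 ∈ B := st6_Kmem E k
    have h2 : k.1.2 ∈ B := by
      have := B.add_mem (B.neg_mem hB) hk
      simpa [neg_add_cancel_left] using this
    exact ⟨⟨hA, hB⟩, ⟨h2, hC⟩⟩
  · rintro ⟨⟨hA, hB⟩, ⟨hB', hC⟩⟩
    exact ⟨hA, hB, hC⟩

lemma st6_mem_stab2 {A B C : Submodule (ZMod 2) E} {x z : X} (hx : x ∈ XA E X A)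
    (hz : z ∈ XA E X C) (k : st6_K E B) :
    k ∈ AddAction.stabilizer (st6_K E B) ((x, z) : X × X) ↔
      k.1.1 ∈ A ∧ k.1.2 ∈ C := by
  rw [AddAction.mem_stabilizer_iff]
  have hvadd : k +ᵥ ((x, z) : X × X) = (k.1.1 +ᵥ x, k.1.2 +ᵥ z) := rfl
  rw [hvadd, Prod.ext_iff]
  simp only [st6_stab_mem E X hx, st6_stab_mem E X hz]

def st6_stabEquiv1 {A B C : Submodule (ZMod 2) E} {x y z : X} (hx : x ∈ XA E X A)
    (hy : y ∈ XA E X B) (hz : z ∈ XA E X C) :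
    ↥(AddAction.stabilizer (st6_K E B) ((x, y, z) : X × X × X)) ≃ ↥(A ⊓ B) × ↥(B ⊓ C) where
  toFun s := (⟨s.1.1.1, ((st6_mem_stab1 E X hx hy hz s.1).1 s.2).1⟩,
              ⟨s.1.1.2, ((st6_mem_stab1 E X hx hy hz s.1).1 s.2).2⟩)
  invFun p := ⟨⟨(p.1.1, p.2.1),
      B.add_mem (Submodule.mem_inf.1 p.1.2).2 (Submodule.mem_inf.1 p.2.2).1⟩,
    (st6_mem_stab1 E X hx hy hz _).2 ⟨p.1.2, p.2.2⟩⟩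
  left_inv s := by rcases s with ⟨⟨⟨e, g⟩, hk⟩, hs⟩; rfl
  right_inv p := by rcases p with ⟨⟨a, ha⟩, ⟨c, hc⟩⟩; rfl

def st6_stabEquiv2 {A B C : Submodule (ZMod 2) E} {x z : X} (hx : x ∈ XA E X A)
    (hz : z ∈ XA E X C) :
    ↥(AddAction.stabilizer (st6_K E B) ((x, z) : X × X)) ≃ ↥(UABC E A B C) where
  toFun s := ⟨(s.1.1.1, s.1.1.1 + s.1.1.2, s.1.1.2),
    ⟨((st6_mem_stab2 E X hx hz s.1).1 s.2).1, st6_Kmem E s.1,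
     ((st6_mem_stab2 E X hx hz s.1).1 s.2).2, by
      rw [show s.1.1.1 + (s.1.1.1 + s.1.1.2) + s.1.1.2
            = (s.1.1.1 + s.1.1.1) + (s.1.1.2 + s.1.1.2) by abel,
        st6_addSelf, st6_addSelf, add_zero]⟩⟩
  invFun u := ⟨⟨(u.1.1, u.1.2.2), by
      show u.1.1 + u.1.2.2 ∈ B
      have h0 : (u.1.1 + u.1.2.2) + u.1.2.1 = 0 := by
        rw [← u.2.2.2.2]; abel
      have h1 : u.1.1 + u.1.2.2 = -u.1.2.1 := eq_neg_of_add_eq_zero_left h0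
      rw [h1, st6_neg]; exact u.2.2.1⟩,
    (st6_mem_stab2 E X hx hz _).2 ⟨u.2.1, u.2.2.2.1⟩⟩
  left_inv s := by rcases s with ⟨⟨⟨e, g⟩, hk⟩, hs⟩; rfl
  right_inv u := by
    rcases u with ⟨⟨a, b, c⟩, ha, hb, hc, habc⟩
    have h0 : (a + c) + b = 0 := by rw [← habc]; abel
    have h1 : a + c = -b := eq_neg_of_add_eq_zero_left h0
    have : a + c = b := by rw [h1, st6_neg]
    apply Subtype.ext
    show ((a, a + c, c) : E × E × E) = (a, b, c)
    rw [this]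

lemma st6_T_eq (A B C : Submodule (ZMod 2) E) (x y z : X) (hx : x ∈ XA E X A)
    (hy : y ∈ XA E X B) (hz : z ∈ XA E X C) :
    {t : X × X × X | t.1 ∈ XA E X A ∧ t.2.1 ∈ XA E X B ∧ t.2.2 ∈ XA E X C ∧
        (t.1, t.2.1) ∈ orb2 E X x y ∧ (t.2.1, t.2.2) ∈ orb2 E X y z}
      = AddAction.orbit (st6_K E B) ((x, y, z) : X × X × X) := by
  ext t
  simp only [Set.mem_setOf_eq, AddAction.mem_orbit_iff]
  constructor
  · rintro ⟨h1, h2, h3, ⟨e, he⟩, ⟨g, hg⟩⟩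
    have ht1 : t.1 = e +ᵥ x := congrArg Prod.fst he
    have ht21 : t.2.1 = e +ᵥ y := congrArg Prod.snd he
    have ht21' : t.2.1 = g +ᵥ y := congrArg Prod.fst hg
    have ht22 : t.2.2 = g +ᵥ z := congrArg Prod.snd hg
    have heg : e + g ∈ B := by
      rw [← st6_stab_mem E X hy, ← vadd_vadd, ← ht21', ht21, vadd_vadd,
        show e + e = 0 from st6_addSelf E e, zero_vadd]
    refine ⟨⟨(e, g), heg⟩, ?_⟩
    show ((e, g) : E × E) +ᵥ ((x, y, z) : X × X × X) = t
    rw [st6_vadd3_def]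
    exact (Prod.ext ht1 (Prod.ext ht21 ht22)).symm
  · rintro ⟨⟨⟨e, g⟩, hk⟩, rfl⟩
    have hk' : e + g ∈ B := hk
    have hey : e +ᵥ y = g +ᵥ y := by
      conv_lhs => rw [show e = g + (e + g) by
        rw [show g + (e + g) = e + (g + g) by abel, st6_addSelf, add_zero]]
      rw [← vadd_vadd, st6_stab_mem E X hy _ |>.2 hk']
    refine ⟨st6_XA_vadd E X A e x hx, st6_XA_vadd E X B e y hy,
      st6_XA_vadd E X C g z hz, ⟨e, rfl⟩, ⟨g, ?_⟩⟩
    show (e +ᵥ y, g +ᵥ z) = (g +ᵥ y, g +ᵥ z)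
    rw [hey]

lemma st6_bullet_eq (A B C : Submodule (ZMod 2) E) (x y z : X) (hx : x ∈ XA E X A)
    (hy : y ∈ XA E X B) (hz : z ∈ XA E X C) :
    bullet X (orb2 E X x y) (orb2 E X y z)
      = AddAction.orbit (st6_K E B) ((x, z) : X × X) := by
  ext q
  simp only [bullet, Set.mem_setOf_eq, AddAction.mem_orbit_iff]
  constructor
  · rintro ⟨y₁, ⟨e, he⟩, ⟨g, hg⟩⟩
    have hq1 : q.1 = e +ᵥ x := congrArg Prod.fst he
    have hy1 : y₁ = e +ᵥ y := congrArg Prod.snd he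
    have hy1' : y₁ = g +ᵥ y := congrArg Prod.fst hg
    have hq2 : q.2 = g +ᵥ z := congrArg Prod.snd hg
    have heg : e + g ∈ B := by
      rw [← st6_stab_mem E X hy, ← vadd_vadd, ← hy1', hy1, vadd_vadd,
        show e + e = 0 from st6_addSelf E e, zero_vadd]
    refine ⟨⟨(e, g), heg⟩, ?_⟩
    show ((e, g) : E × E) +ᵥ ((x, z) : X × X) = q
    rw [st6_vadd2_def]
    exact (Prod.ext hq1 hq2).symm
  · rintro ⟨⟨⟨e, g⟩, hk⟩, rfl⟩
    have hk' : e + g ∈ B := hk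
    have hey : e +ᵥ y = g +ᵥ y := by
      conv_lhs => rw [show e = g + (e + g) by
        rw [show g + (e + g) = e + (g + g) by abel, st6_addSelf, add_zero]]
      rw [← vadd_vadd, st6_stab_mem E X hy _ |>.2 hk']
    refine ⟨e +ᵥ y, ⟨e, rfl⟩, ⟨g, ?_⟩⟩
    show ((e +ᵥ y : X), (g +ᵥ z : X)) = (g +ᵥ y, g +ᵥ z)
    rw [hey]

/-- cardinalities of the fibre product of two composable orbits and of
`𝒪 • 𝒪'`. -/
theorem statement6 (A B C : Submodule (ZMod 2) E) (O O' : Set (X × X))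
    (hO : IsOrb2 E X A B O) (hO' : IsOrb2 E X B C O')
    (h : p2 X O = p1 X O') :
    (Nat.card {t : X × X × X // t.1 ∈ XA E X A ∧ t.2.1 ∈ XA E X B ∧ t.2.2 ∈ XA E X C ∧
        (t.1, t.2.1) ∈ O ∧ (t.2.1, t.2.2) ∈ O'} : ℚ) =
      (Nat.card E : ℚ) * (Nat.card ↥B : ℚ)
        / ((Nat.card ↥(A ⊓ B) : ℚ) * (Nat.card ↥(B ⊓ C) : ℚ)) ∧
    (Nat.card ↥(bullet X O O') : ℚ) =
      (Nat.card E : ℚ) * (Nat.card ↥B : ℚ) / (Nat.card ↥(UABC E A B C) : ℚ) := by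
  classical
  obtain ⟨x, y, hx, hy, hOeq⟩ := hO
  obtain ⟨y', z₀, hy', hz₀, hO'eq⟩ := hO'
  have hyp2 : y ∈ p2 X O := by
    rw [hOeq]
    exact ⟨((0 : E) +ᵥ x, (0 : E) +ᵥ y), ⟨0, rfl⟩, by simp⟩
  rw [h] at hyp2
  obtain ⟨q, hqO', hq1⟩ := hyp2
  rw [hO'eq] at hqO'
  obtain ⟨g, hg⟩ := hqO'
  have hyg : y = g +ᵥ y' := by rw [← hq1, hg]
  set z := g +ᵥ z₀ with hzdef
  have hz : z ∈ XA E X C := st6_XA_vadd E X C g z₀ hz₀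
  have hO'eq2 : O' = orb2 E X y z := by
    rw [hO'eq, ← st6_orb2_vadd E X g y' z₀, ← hyg]
  -- cardinality of K
  have cK : Nat.card ↥(st6_K E B) = Nat.card E * Nat.card ↥B := by
    rw [Nat.card_congr (st6_kEquiv E B), Nat.card_prod]
  -- part 1
  have hset1 : {t : X × X × X | t.1 ∈ XA E X A ∧ t.2.1 ∈ XA E X B ∧ t.2.2 ∈ XA E X C ∧
        (t.1, t.2.1) ∈ O ∧ (t.2.1, t.2.2) ∈ O'}
      = AddAction.orbit (st6_K E B) ((x, y, z) : X × X × X) := by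
    rw [hOeq, hO'eq2]
    exact st6_T_eq E X A B C x y z hx hy hz
  have os1 := AddAction.card_orbit_mul_card_stabilizer_eq_card_addGroup
    (st6_K E B) ((x, y, z) : X × X × X)
  rw [← Nat.card_eq_fintype_card, ← Nat.card_eq_fintype_card,
    ← Nat.card_eq_fintype_card] at os1
  have cstab1 : Nat.card ↥(AddAction.stabilizer (st6_K E B) ((x, y, z) : X × X × X))
      = Nat.card ↥(A ⊓ B) * Nat.card ↥(B ⊓ C) := by
    rw [Nat.card_congr (st6_stabEquiv1 E X hx hy hz), Nat.card_prod]
  have e1 : Nat.card {t : X × X × X // t.1 ∈ XA E X A ∧ t.2.1 ∈ XA E X B ∧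
        t.2.2 ∈ XA E X C ∧ (t.1, t.2.1) ∈ O ∧ (t.2.1, t.2.2) ∈ O'}
      = Nat.card ↥(AddAction.orbit (st6_K E B) ((x, y, z) : X × X × X)) :=
    Nat.card_congr (Equiv.setCongr hset1)
  have key1 : Nat.card {t : X × X × X // t.1 ∈ XA E X A ∧ t.2.1 ∈ XA E X B ∧
        t.2.2 ∈ XA E X C ∧ (t.1, t.2.1) ∈ O ∧ (t.2.1, t.2.2) ∈ O'}
        * (Nat.card ↥(A ⊓ B) * Nat.card ↥(B ⊓ C))
      = Nat.card E * Nat.card ↥B := by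
    rw [e1, ← cstab1, os1, cK]
  -- part 2
  have hset2 : bullet X O O' = AddAction.orbit (st6_K E B) ((x, z) : X × X) := by
    rw [hOeq, hO'eq2]
    exact st6_bullet_eq E X A B C x y z hx hy hz
  have os2 := AddAction.card_orbit_mul_card_stabilizer_eq_card_addGroup
    (st6_K E B) ((x, z) : X × X)
  rw [← Nat.card_eq_fintype_card, ← Nat.card_eq_fintype_card,
    ← Nat.card_eq_fintype_card] at os2
  have cstab2 : Nat.card ↥(AddAction.stabilizer (st6_K E B) ((x, z) : X × X))
      = Nat.card ↥(UABC E A B C) :=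
    Nat.card_congr (st6_stabEquiv2 E X hx hz)
  have e2 : Nat.card ↥(bullet X O O')
      = Nat.card ↥(AddAction.orbit (st6_K E B) ((x, z) : X × X)) :=
    Nat.card_congr (Equiv.setCongr hset2)
  have key2 : Nat.card ↥(bullet X O O') * Nat.card ↥(UABC E A B C)
      = Nat.card E * Nat.card ↥B := by
    rw [e2, ← cstab2, os2, cK]
  -- positivity
  have hAB : 0 < Nat.card ↥(A ⊓ B) := Nat.card_pos
  have hBC : 0 < Nat.card ↥(B ⊓ C) := Nat.card_pos
  have hU : 0 < Nat.card ↥(UABC E A B C) := by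
    haveI : Nonempty ↥(UABC E A B C) :=
      ⟨⟨(0, 0, 0), by simp [UABC]⟩⟩
    exact Nat.card_pos
  constructor
  · rw [eq_div_iff (by positivity)]
    exact_mod_cast key1
  · rw [eq_div_iff (by positivity)]
    exact_mod_cast key2

end Lusztig
end
end
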